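/- arXiv:2402.11334 — 4 statements merged into one kernel-verified Lean document; each statement's English description precedes it below -/
import Mathlib

section
/- If p, q ∈ (0,1), then (log((q(1-p))/(p(1-q))))^2 ≤ 4(p-q)^2/(p·q) + 4(p-q)^2/((1-p)(1-q)). -/
open Real

lemma sq_log_div_le (a b : ℝ) (ha : 0 < a) (hb : 0 < b) :
    (Real.log (b / a)) ^ 2 ≤ (a - b) ^ 2 / (a * b) := by
  wlog hab : a ≤ b generalizing a b
  · have h := this b a hb ha (le_of_not_ge hab)
    have hlog : Real.log (b / a) = - Real.log (a / b) := by
      rw [Real.log_div hb.ne' ha.ne', Real.log_div ha.ne' hb.ne']; ring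
    rw [hlog]
    calc (- Real.log (a / b)) ^ 2 = (Real.log (a / b)) ^ 2 := by ring
      _ ≤ (b - a) ^ 2 / (b * a) := h
      _ = (a - b) ^ 2 / (a * b) := by rw [mul_comm]; ring_nf
  · set s := Real.log (b / a) / 2 with hs_def
    have hba : (1:ℝ) ≤ b / a := (one_le_div ha).2 hab
    have hs : 0 ≤ s := div_nonneg (Real.log_nonneg hba) (by norm_num)
    have hsinh : s ≤ Real.sinh s := Real.self_le_sinh_iff.2 hs
    set u := Real.exp s with hu_def
    have hu1 : (1:ℝ) ≤ u := Real.one_le_exp hs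
    have hu0 : 0 < u := Real.exp_pos s
    have hu2 : u ^ 2 = b / a := by
      rw [hu_def, ← Real.exp_nat_mul]
      rw [hs_def]
      rw [show (2:ℕ) * (Real.log (b / a) / 2) = Real.log (b / a) by push_cast; ring]
      exact Real.exp_log (div_pos hb ha)
    have hsinh_eq : Real.sinh s = (u - u⁻¹) / 2 := by
      rw [Real.sinh_eq, hu_def, Real.exp_neg]
    have h2s : 2 * s ≤ u - u⁻¹ := by
      have := hsinh
      rw [hsinh_eq] at this
      linarith
    have hub : 0 ≤ u - u⁻¹ := by
      have : u⁻¹ ≤ 1 := by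
        rw [inv_le_one_iff₀]; right; exact hu1
      linarith
    have hsq : (2 * s) ^ 2 ≤ (u - u⁻¹) ^ 2 := by
      apply sq_le_sq' <;> nlinarith
    have hlog2s : Real.log (b / a) = 2 * s := by rw [hs_def]; ring
    rw [hlog2s]
    calc (2 * s) ^ 2 ≤ (u - u⁻¹) ^ 2 := hsq
      _ = u ^ 2 + (u ^ 2)⁻¹ - 2 := by field_simp; ring
      _ = b / a + a / b - 2 := by rw [hu2]; rw [inv_div]
      _ = (a - b) ^ 2 / (a * b) := by field_simp; ring

theorem log_odds_ratio_sq_le' (p q : ℝ) (hp : p ∈ Set.Ioo (0:ℝ) 1) (hq : q ∈ Set.Ioo (0:ℝ) 1) :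
    (Real.log ((q * (1 - p)) / (p * (1 - q)))) ^ 2 ≤
      4 * (p - q) ^ 2 / (p * q) + 4 * (p - q) ^ 2 / ((1 - p) * (1 - q)) := by
  obtain ⟨hp0, hp1⟩ := hp
  obtain ⟨hq0, hq1⟩ := hq
  have hp1' : 0 < 1 - p := by linarith
  have hq1' : 0 < 1 - q := by linarith
  have hA := sq_log_div_le p q hp0 hq0
  have hB := sq_log_div_le (1 - q) (1 - p) hq1' hp1'
  have hsplit : Real.log ((q * (1 - p)) / (p * (1 - q)))
      = Real.log (q / p) + Real.log ((1 - p) / (1 - q)) := by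
    rw [← Real.log_mul (by positivity) (by positivity)]
    congr 1
    field_simp
  rw [hsplit]
  have hB' : (Real.log ((1 - p) / (1 - q))) ^ 2 ≤ (p - q) ^ 2 / ((1 - p) * (1 - q)) := by
    calc (Real.log ((1 - p) / (1 - q))) ^ 2 ≤ (1 - q - (1 - p)) ^ 2 / ((1 - q) * (1 - p)) := hB
      _ = (p - q) ^ 2 / ((1 - p) * (1 - q)) := by rw [mul_comm]; ring_nf
  have hX : 0 ≤ (p - q) ^ 2 / (p * q) := by positivity
  have hY : 0 ≤ (p - q) ^ 2 / ((1 - p) * (1 - q)) := by positivity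
  have h4X : 4 * (p - q) ^ 2 / (p * q) = 4 * ((p - q) ^ 2 / (p * q)) := by ring
  have h4Y : 4 * (p - q) ^ 2 / ((1 - p) * (1 - q)) = 4 * ((p - q) ^ 2 / ((1 - p) * (1 - q))) := by
    ring
  rw [h4X, h4Y]
  nlinarith [sq_nonneg (Real.log (q / p) - Real.log ((1 - p) / (1 - q))), hA, hB', hX, hY]
end

section
/- Let (P_n) and (Q_n) be sequences of probability measures on measurable spaces (X_n, B_n) and a_n ↓ 0. Suppose that for every ε > 0 there exists δ > 0 such that for all sufficiently large n, Q_n(dP_n/dQ_n < δ·a_n) < ε. Then Q_n is a_n-remotely contiguous with respect to P_n: for any sequence of measurable functions φ_n : X_n → [0,1], if ∫φ_n dP_n = o(a_n) then ∫φ_n dQ_n = o(1). -/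
/-!
Split the `Q`-mass of `φ` along the set `S = {p < c q}` with `c = δ aₙ`. On `S` use `φ ≤ 1`, which
costs at most `Q(S)`; off `S` the likelihood ratio gives `q ≤ c⁻¹ p`, which costs at most
`c⁻¹ ∫ φ dP`. Hence `∫ φ dQ ≤ Q(S) + (δ aₙ)⁻¹ ∫ φ dP`: the hypothesis makes the first term small
for a suitable `δ`, and `∫ φ dP = o(aₙ)` makes the second one small for that fixed `δ`.
-/

open MeasureTheory Filter Asymptotics
open scoped ENNReal

namespace MeasureTheory

variable {α : Type*} [MeasurableSpace α]

theorem lintegral_withDensity_le_withDensity_setOf_lt_add {μ : Measure α} {f g φ : α → ℝ≥0∞}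
    (hf : Measurable f) (hg : Measurable g) (hφ : Measurable φ) (hφ1 : ∀ x, φ x ≤ 1)
    {c : ℝ≥0∞} (hc0 : c ≠ 0) (hc : c ≠ ∞) :
    ∫⁻ x, φ x ∂μ.withDensity g ≤
      μ.withDensity g {x | f x < c * g x} + c⁻¹ * ∫⁻ x, φ x ∂μ.withDensity f := by
  set S := {x | f x < c * g x}
  have pointwise : ∀ x, g x * φ x ≤ S.indicator g x + c⁻¹ * (f x * φ x) := by
    intro x
    by_cases hx : x ∈ S
    · rw [Set.indicator_of_mem hx]
      exact (mul_le_of_le_one_right' (hφ1 x)).trans le_self_add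
    · rw [Set.indicator_of_notMem hx, zero_add, ← mul_assoc]
      have hgf : g x ≤ c⁻¹ * f x := by
        rw [← ENNReal.div_eq_inv_mul, ENNReal.le_div_iff_mul_le (.inl hc0) (.inl hc), mul_comm]
        exact not_lt.mp hx
      gcongr
  calc ∫⁻ x, φ x ∂μ.withDensity g ≤ ∫⁻ x, g x * φ x ∂μ :=
        lintegral_withDensity_le_lintegral_mul μ hg φ
    _ ≤ ∫⁻ x, S.indicator g x + c⁻¹ * (f x * φ x) ∂μ := lintegral_mono pointwise
    _ = ∫⁻ x, S.indicator g x ∂μ + c⁻¹ * ∫⁻ x, f x * φ x ∂μ := by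
        rw [lintegral_add_right _ (by fun_prop : Measurable fun x => c⁻¹ * (f x * φ x)),
          lintegral_const_mul' _ _ (ENNReal.inv_ne_top.mpr hc0)]
    _ ≤ μ.withDensity g S + c⁻¹ * ∫⁻ x, φ x ∂μ.withDensity f := by
        gcongr ?_ + c⁻¹ * ?_
        · exact (lintegral_indicator_le g S).trans (withDensity_apply_le g S)
        · exact (lintegral_withDensity_eq_lintegral_mul μ hf hφ).ge

theorem ofReal_integral_le_measure_setOf_lt_add {μ P Q : Measure α} [IsFiniteMeasure P]
    {p q φ : α → ℝ} (hp : Measurable p) (hq : Measurable q) (hφ : Measurable φ)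
    (hφ01 : ∀ x, φ x ∈ Set.Icc (0 : ℝ) 1)
    (hP : P = μ.withDensity fun x => ENNReal.ofReal (p x))
    (hQ : Q = μ.withDensity fun x => ENNReal.ofReal (q x)) {c : ℝ} (hc : 0 < c) :
    ENNReal.ofReal (∫ x, φ x ∂Q) ≤
      Q {x | p x < c * q x} + ENNReal.ofReal (c⁻¹ * ∫ x, φ x ∂P) := by
  have hφ0 : 0 ≤ᵐ[P] φ := .of_forall fun x => (hφ01 x).1
  have hφP : Integrable φ P :=
    .of_bound hφ.aestronglyMeasurable 1 (.of_forall fun x => by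
      rw [Real.norm_of_nonneg (hφ01 x).1]; exact (hφ01 x).2)
  have hS : {x | ENNReal.ofReal (p x) < ENNReal.ofReal c * ENNReal.ofReal (q x)} ⊆
      {x | p x < c * q x} := fun x hx => by
    rw [Set.mem_ofPred_eq, ← ENNReal.ofReal_mul hc.le, ENNReal.ofReal_lt_ofReal_iff'] at hx
    exact hx.1
  calc ENNReal.ofReal (∫ x, φ x ∂Q) ≤ ∫⁻ x, ENNReal.ofReal (φ x) ∂Q := by
        rw [integral_eq_lintegral_of_nonneg_ae (.of_forall fun x => (hφ01 x).1)
          hφ.aestronglyMeasurable]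
        exact ENNReal.ofReal_toReal_le
    _ ≤ Q {x | ENNReal.ofReal (p x) < ENNReal.ofReal c * ENNReal.ofReal (q x)} +
        (ENNReal.ofReal c)⁻¹ * ∫⁻ x, ENNReal.ofReal (φ x) ∂P := by
        rw [hP, hQ]
        exact lintegral_withDensity_le_withDensity_setOf_lt_add hp.ennreal_ofReal
          hq.ennreal_ofReal hφ.ennreal_ofReal (fun x => ENNReal.ofReal_le_one.mpr (hφ01 x).2)
          (ENNReal.ofReal_pos.mpr hc).ne' ENNReal.ofReal_ne_top
    _ = Q {x | ENNReal.ofReal (p x) < ENNReal.ofReal c * ENNReal.ofReal (q x)} +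
        ENNReal.ofReal (c⁻¹ * ∫ x, φ x ∂P) := by
        rw [← ofReal_integral_eq_lintegral_ofReal hφP hφ0,
          ENNReal.ofReal_mul (inv_nonneg.mpr hc.le), ENNReal.ofReal_inv_of_pos hc]
    _ ≤ Q {x | p x < c * q x} + ENNReal.ofReal (c⁻¹ * ∫ x, φ x ∂P) := by
        gcongr

end MeasureTheory

theorem remote_contiguity_of_lr_tail_bound_general
    {X : ℕ → Type*} [∀ n, MeasurableSpace (X n)]
    (ν : ∀ n, Measure (X n))
    (p q : ∀ n, X n → ℝ)
    (hpm : ∀ n, Measurable (p n)) (hqm : ∀ n, Measurable (q n))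
    (P Q : ∀ n, Measure (X n))
    [∀ n, IsProbabilityMeasure (P n)]
    (hP : ∀ n, P n = (ν n).withDensity (fun x => ENNReal.ofReal (p n x)))
    (hQ : ∀ n, Q n = (ν n).withDensity (fun x => ENNReal.ofReal (q n x)))
    (a : ℕ → ℝ) (ha0 : ∀ n, 0 < a n)
    (h : ∀ ε > (0:ℝ), ∃ δ > (0:ℝ), ∀ᶠ n in atTop,
      Q n {x | p n x < δ * a n * q n x} < ENNReal.ofReal ε)
    (φ : ∀ n, X n → ℝ) (hφm : ∀ n, Measurable (φ n))
    (hφ01 : ∀ n x, φ n x ∈ Set.Icc (0:ℝ) 1)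
    (hPφ : (fun n => ∫ x, φ n x ∂(P n)) =o[atTop] a) :
    Tendsto (fun n => ∫ x, φ n x ∂(Q n)) atTop (nhds 0) := by
  refine NormedAddGroup.tendsto_nhds_zero.2 fun ε hε => ?_
  obtain ⟨δ, hδ, hQS⟩ := h (ε / 2) (half_pos hε)
  filter_upwards [hQS, hPφ.bound (by positivity : 0 < ε / 2 * δ)] with n hQn hPn
  have hc : 0 < δ * a n := mul_pos hδ (ha0 n)
  have hPsmall : (δ * a n)⁻¹ * ∫ x, φ n x ∂(P n) ≤ ε / 2 := by
    rw [Real.norm_of_nonneg (ha0 n).le] at hPn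
    rw [inv_mul_le_iff₀ hc]
    linarith [le_abs_self (∫ x, φ n x ∂(P n)), Real.norm_eq_abs (∫ x, φ n x ∂(P n))]
  rw [Real.norm_of_nonneg (integral_nonneg fun x => (hφ01 n x).1),
    ← ENNReal.ofReal_lt_ofReal_iff hε]
  calc ENNReal.ofReal (∫ x, φ n x ∂(Q n))
      ≤ Q n {x | p n x < δ * a n * q n x} + ENNReal.ofReal ((δ * a n)⁻¹ * ∫ x, φ n x ∂(P n)) :=
        ofReal_integral_le_measure_setOf_lt_add (hpm n) (hqm n) (hφm n) (hφ01 n) (hP n) (hQ n) hc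
    _ < ENNReal.ofReal (ε / 2) + ENNReal.ofReal (ε / 2) :=
        ENNReal.add_lt_add_of_lt_of_le ENNReal.ofReal_ne_top hQn (ENNReal.ofReal_le_ofReal hPsmall)
    _ = ENNReal.ofReal ε := by
        rw [← ENNReal.ofReal_add (half_pos hε).le (half_pos hε).le, add_halves]

theorem remote_contiguity_of_lr_tail_bound
    {X : ℕ → Type*} [∀ n, MeasurableSpace (X n)]
    (ν : ∀ n, Measure (X n)) [∀ n, SigmaFinite (ν n)]
    (p q : ∀ n, X n → ℝ)
    (hpm : ∀ n, Measurable (p n)) (hqm : ∀ n, Measurable (q n))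
    (hp0 : ∀ n x, 0 ≤ p n x) (hq0 : ∀ n x, 0 ≤ q n x)
    (P Q : ∀ n, Measure (X n))
    [∀ n, IsProbabilityMeasure (P n)] [∀ n, IsProbabilityMeasure (Q n)]
    (hP : ∀ n, P n = (ν n).withDensity (fun x => ENNReal.ofReal (p n x)))
    (hQ : ∀ n, Q n = (ν n).withDensity (fun x => ENNReal.ofReal (q n x)))
    (a : ℕ → ℝ) (ha0 : ∀ n, 0 < a n) (haanti : Antitone a)
    (halim : Tendsto a atTop (nhds 0))
    (h : ∀ ε > (0:ℝ), ∃ δ > (0:ℝ), ∀ᶠ n in atTop,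
      Q n {x | p n x < δ * a n * q n x} < ENNReal.ofReal ε)
    (φ : ∀ n, X n → ℝ) (hφm : ∀ n, Measurable (φ n))
    (hφ01 : ∀ n x, φ n x ∈ Set.Icc (0:ℝ) 1)
    (hPφ : (fun n => ∫ x, φ n x ∂(P n)) =o[atTop] a) :
    Tendsto (fun n => ∫ x, φ n x ∂(Q n)) atTop (nhds 0) :=
  remote_contiguity_of_lr_tail_bound_general ν p q hpm hqm P Q hP hQ a ha0 h φ hφm hφ01 hPφ
end

section
/- Let λ_n → 1 with λ_n - 1 = O(n^{-1/3}). Let P_n and Q_n be homogeneous Erdős–Rényi graph distributions on n vertices with edge probabilities 1/n and λ_n/n respectively. Then there exists A > 0 such that the Hellinger affinity satisfies α(P_n, Q_n) = A·exp(-n(λ_n-1)^2/16) + o(1) as n → ∞. In particular, log α(P_n, Q_n) = -n(λ_n-1)^2/16 + O(n(λ_n-1)^3) + O(1). -/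
/-!
Write `ε = λ - 1`. The per-edge affinity of `Bernoulli(1/n)` and `Bernoulli(λ/n)` is `1 - u`, where
`2u = (√(1/n) - √(λ/n))² + (√(1 - 1/n) - √(1 - λ/n))²` is twice the squared Hellinger distance;
the first square is `(√λ - 1)² / n = ε² / (4n) + O(|ε|³ / n)` and the second is `O(ε² / n²)`.
Raising to the power `C(n,2)` and using `log (1 - u) = -u + O(u²)` gives
`log α = -n ε² / 16 + E` with `|E| ≤ n |ε|³ + ε² = (n ε²) |ε| + ε²`. An error that grows at most
like `x |ε|` in `x = n ε²` is absorbed by the factor `exp (-x / 16)`, so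
`α - exp (-n ε² / 16) → 0` as `ε → 0`, i.e. the first claim holds with `A = 1`.
-/

open Filter Asymptotics Real

lemma abs_exp_sub_exp_le (a b : ℝ) : |exp a - exp b| ≤ |a - b| * exp (max a b) := by
  wlog hba : b ≤ a generalizing a b
  · rw [abs_sub_comm, abs_sub_comm a, max_comm]
    exact this b a (le_of_not_ge hba)
  have htangent : (b - a + 1) * exp a ≤ exp b := by
    calc (b - a + 1) * exp a ≤ exp (b - a) * exp a := by gcongr; exact add_one_le_exp _
      _ = exp b := by rw [← exp_add, sub_add_cancel]
  rw [abs_of_nonneg (sub_nonneg.2 (exp_le_exp.2 hba)), abs_of_nonneg (sub_nonneg.2 hba),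
    max_eq_left hba]
  linarith

lemma abs_exp_div_add_sub_exp_div_le {c x e E : ℝ} (hc : 0 < c) (hx : 0 ≤ x) (he : 0 ≤ e)
    (hec : 2 * c * e ≤ 1) (hE : |E| ≤ x * e + e ^ 2) :
    |exp (-x / c + E) - exp (-x / c)| ≤ (2 * c * e + e ^ 2) * exp (e ^ 2) := by
  have hxe : x * e ≤ x / (2 * c) := by
    rw [le_div_iff₀ (by positivity)]; nlinarith
  have hy : 0 ≤ x / (2 * c) := by positivity
  have hmax : max (-x / c + E) (-x / c) ≤ -(x / (2 * c)) + e ^ 2 := by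
    have : -x / c = -(x / (2 * c)) - x / (2 * c) := by field_simp; ring
    rw [max_le_iff]; constructor <;> linarith [le_abs_self E, sq_nonneg e]
  -- `y * exp (-y) ≤ exp (-1) ≤ 1` with `y = x / (2c)` absorbs the linear growth of `|E|` in `x`
  have hdecay : x * exp (-(x / (2 * c))) ≤ 2 * c := by
    calc x * exp (-(x / (2 * c))) = 2 * c * (x / (2 * c) * exp (-(x / (2 * c)))) := by
          field_simp
      _ ≤ 2 * c * 1 := by
          gcongr
          exact (mul_exp_neg_le_exp_neg_one _).trans (exp_le_one_iff.2 (by norm_num))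
      _ = 2 * c := mul_one _
  have hexp_le : exp (-(x / (2 * c))) ≤ 1 := exp_le_one_iff.2 (by linarith)
  calc |exp (-x / c + E) - exp (-x / c)|
      ≤ |E| * exp (-(x / (2 * c)) + e ^ 2) := by
        refine (abs_exp_sub_exp_le _ _).trans ?_
        rw [add_sub_cancel_left]; gcongr
    _ ≤ (x * e + e ^ 2) * exp (-(x / (2 * c))) * exp (e ^ 2) := by
        rw [exp_add, ← mul_assoc]; gcongr
    _ ≤ (2 * c * e + e ^ 2) * exp (e ^ 2) := by
        gcongr
        nlinarith [exp_pos (-(x / (2 * c)))]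

lemma tendsto_exp_div_add_sub_exp_div {α : Type*} {l : Filter α} {c : ℝ} (hc : 0 < c)
    {x e E : α → ℝ} (hx : ∀ᶠ i in l, 0 ≤ x i) (he : Tendsto e l (nhds 0))
    (hE : ∀ᶠ i in l, |E i| ≤ x i * |e i| + e i ^ 2) :
    Tendsto (fun i => exp (-x i / c + E i) - exp (-x i / c)) l (nhds 0) := by
  have hbound : Tendsto (fun i => (2 * c * |e i| + |e i| ^ 2) * exp (|e i| ^ 2)) l (nhds 0) := by
    have h := ((continuous_abs.tendsto (0:ℝ)).comp he)
    rw [abs_zero] at h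
    simpa using ((h.const_mul (2 * c)).add (h.pow 2)).mul ((h.pow 2).rexp)
  have hsmall : ∀ᶠ i in l, 2 * c * |e i| ≤ 1 := by
    have h := (continuous_abs.tendsto (0:ℝ)).comp he
    rw [abs_zero] at h
    exact (h.const_mul (2 * c)).eventually (eventually_le_nhds (by simp))
  refine squeeze_zero_norm' ?_ hbound
  filter_upwards [hx, hE, hsmall] with i hxi hEi hsi
  rw [← sq_abs (e i)] at hEi
  exact abs_exp_div_add_sub_exp_div_le hc hxi (abs_nonneg _) hsi hEi

lemma abs_log_one_sub_add_le {u : ℝ} (hu : |u| ≤ 1 / 2) : |log (1 - u) + u| ≤ 2 * u ^ 2 := by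
  have h := abs_log_sub_add_sum_range_le (hu.trans_lt (by norm_num)) 1
  simp only [Finset.sum_range_one, zero_add, pow_one, Nat.cast_zero, div_one] at h
  rw [add_comm]
  calc _ ≤ |u| ^ 2 / (1 - |u|) := h
    _ ≤ |u| ^ 2 / (1 / 2) := by gcongr; linarith
    _ = 2 * u ^ 2 := by rw [sq_abs]; ring

lemma sq_sqrt_sub_sqrt_le_sq_sub {x y : ℝ} (hx : 0 ≤ x) (hy : 0 ≤ y) (hxy : 1 ≤ x + y) :
    (√x - √y) ^ 2 ≤ (x - y) ^ 2 := by
  have hx' := sq_sqrt hx; have hy' := sq_sqrt hy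
  have hsum : 1 ≤ (√x + √y) ^ 2 := by nlinarith [sqrt_nonneg x, sqrt_nonneg y]
  calc (√x - √y) ^ 2 ≤ (√x - √y) ^ 2 * (√x + √y) ^ 2 :=
        le_mul_of_one_le_right (sq_nonneg _) hsum
    _ = (√x ^ 2 - √y ^ 2) ^ 2 := by ring
    _ = (x - y) ^ 2 := by rw [hx', hy']

lemma abs_sq_sqrt_sub_one_sub_le {lam : ℝ} (h : 0 ≤ lam) :
    |(√lam - 1) ^ 2 - (lam - 1) ^ 2 / 4| ≤ |lam - 1| ^ 3 := by
  set s := √lam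
  have hs : 0 ≤ s := sqrt_nonneg lam
  rw [← sq_sqrt h]
  have hid : (s - 1) ^ 2 - (s ^ 2 - 1) ^ 2 / 4 = -((s - 1) ^ 3 * ((s + 3) / 4)) := by ring
  rw [hid, abs_neg, abs_mul, abs_pow, abs_of_nonneg (by positivity : 0 ≤ (s + 3) / 4),
    show s ^ 2 - 1 = (s - 1) * (s + 1) by ring, abs_mul, mul_pow,
    abs_of_nonneg (by positivity : 0 ≤ s + 1)]
  gcongr
  nlinarith [pow_le_pow_left₀ (by linarith : (0:ℝ) ≤ 1) (by linarith : 1 ≤ s + 1) 2]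

lemma abs_pow_three_le_sq_div_two {ε : ℝ} (hε : |ε| ≤ 1 / 2) : |ε| ^ 3 ≤ ε ^ 2 / 2 := by
  calc |ε| ^ 3 = ε ^ 2 * |ε| := by rw [pow_succ, sq_abs]
    _ ≤ ε ^ 2 * (1 / 2) := by gcongr
    _ = ε ^ 2 / 2 := by ring

noncomputable def bernoulliAffinity (p q : ℝ) : ℝ := √(p * q) + √((1 - p) * (1 - q))

lemma one_sub_bernoulliAffinity {p q : ℝ} (hp0 : 0 ≤ p) (hp1 : p ≤ 1) (hq0 : 0 ≤ q)
    (hq1 : q ≤ 1) :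
    1 - bernoulliAffinity p q = ((√p - √q) ^ 2 + (√(1 - p) - √(1 - q)) ^ 2) / 2 := by
  rw [bernoulliAffinity, sqrt_mul hp0, sqrt_mul (sub_nonneg.2 hp1)]
  linear_combination (-1 / 2 : ℝ) * (sq_sqrt hp0 + sq_sqrt hq0 + sq_sqrt (sub_nonneg.2 hp1)
    + sq_sqrt (sub_nonneg.2 hq1))

lemma le_one_sub_bernoulliAffinity {p q : ℝ} (hp0 : 0 ≤ p) (hp1 : p ≤ 1) (hq0 : 0 ≤ q)
    (hq1 : q ≤ 1) : (√p - √q) ^ 2 / 2 ≤ 1 - bernoulliAffinity p q := by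
  rw [one_sub_bernoulliAffinity hp0 hp1 hq0 hq1]
  gcongr
  exact le_add_of_nonneg_right (sq_nonneg _)

lemma one_sub_bernoulliAffinity_le {p q : ℝ} (hp0 : 0 ≤ p) (hp1 : p ≤ 1) (hq0 : 0 ≤ q)
    (hq1 : q ≤ 1) (hpq : p + q ≤ 1) :
    1 - bernoulliAffinity p q ≤ (√p - √q) ^ 2 / 2 + (p - q) ^ 2 / 2 := by
  have h := sq_sqrt_sub_sqrt_le_sq_sub (sub_nonneg.2 hp1) (sub_nonneg.2 hq1) (by linarith)
  rw [one_sub_bernoulliAffinity hp0 hp1 hq0 hq1]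
  linarith [show ((1 - p) - (1 - q)) ^ 2 = (p - q) ^ 2 by ring]

lemma bernoulliAffinity_pos {p q : ℝ} (hp : p < 1) (hq : q < 1) : 0 < bernoulliAffinity p q :=
  add_pos_of_nonneg_of_pos (sqrt_nonneg _) (sqrt_pos.2 (mul_pos (by linarith) (by linarith)))

lemma bernoulliAffinity_one_div_div {n : ℝ} (hn : 0 ≤ n) (lam : ℝ) :
    bernoulliAffinity (1 / n) (lam / n) = √lam / n + √((1 - 1 / n) * (1 - lam / n)) := by
  rw [bernoulliAffinity, show 1 / n * (lam / n) = lam / n ^ 2 by ring, sqrt_div' _ (sq_nonneg n),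
    sqrt_sq hn]

lemma abs_choose_two_mul_log_one_sub_add_le {m ε u : ℝ} (hm : 1 ≤ m) (hε : |ε| ≤ 1 / 2)
    (hu0 : 0 ≤ u) (hu : u ≤ ε ^ 2 / m) : |m * (m - 1) / 2 * (log (1 - u) + u)| ≤ ε ^ 2 / 4 := by
  have hε2 : ε ^ 2 ≤ 1 / 4 := by nlinarith [sq_abs ε, abs_nonneg ε]
  have hu2 : |u| ≤ 1 / 2 := by
    rw [abs_of_nonneg hu0]
    exact hu.trans ((div_le_self (sq_nonneg ε) hm).trans (by linarith))
  calc |m * (m - 1) / 2 * (log (1 - u) + u)| ≤ m ^ 2 / 2 * (2 * (ε ^ 2 / m) ^ 2) := by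
        rw [abs_mul, abs_of_nonneg (by nlinarith)]
        exact mul_le_mul (by nlinarith) ((abs_log_one_sub_add_le hu2).trans (by gcongr))
          (abs_nonneg _) (by positivity)
    _ = ε ^ 2 * ε ^ 2 := by field_simp
    _ ≤ ε ^ 2 / 4 := by nlinarith [sq_nonneg ε]

lemma abs_choose_two_mul_sub_le {m ε δ u : ℝ} (hm : 1 ≤ m) (hε : |ε| ≤ 1 / 2) (hδ0 : 0 ≤ δ)
    (hδ : |δ - ε ^ 2 / 4| ≤ |ε| ^ 3) (hu : δ / (2 * m) ≤ u)
    (hu' : u ≤ δ / (2 * m) + ε ^ 2 / (2 * m ^ 2)) :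
    |m * (m - 1) / 2 * u - m * ε ^ 2 / 16| ≤ m * |ε| ^ 3 / 4 + ε ^ 2 / 4 := by
  have hδε : δ ≤ ε ^ 2 := by
    linarith [le_abs_self (δ - ε ^ 2 / 4), abs_pow_three_le_sq_div_two hε]
  set r := u - δ / (2 * m)
  have hr : m * (m - 1) / 2 * r ≤ ε ^ 2 / 4 := by
    calc m * (m - 1) / 2 * r ≤ m ^ 2 / 2 * (ε ^ 2 / (2 * m ^ 2)) :=
          mul_le_mul (by nlinarith) (by linarith) (by linarith) (by positivity)
      _ = ε ^ 2 / 4 := by field_simp; ring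
  have hsplit : m * (m - 1) / 2 * u - m * ε ^ 2 / 16
      = m / 4 * (δ - ε ^ 2 / 4) + (m * (m - 1) / 2 * r - δ / 4) := by
    simp only [r]; field_simp; ring
  rw [hsplit]
  refine (abs_add_le _ _).trans (add_le_add ?_ ?_)
  · rw [abs_mul, abs_of_nonneg (by positivity : 0 ≤ m / 4)]
    calc m / 4 * |δ - ε ^ 2 / 4| ≤ m / 4 * |ε| ^ 3 := by gcongr
      _ = m * |ε| ^ 3 / 4 := by ring
  · have : 0 ≤ m * (m - 1) / 2 * r := mul_nonneg (by nlinarith) (by linarith)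
    rw [abs_le]; constructor <;> linarith

-- `ε` stands for `λ - 1` and `δ` for `(√λ - 1) ^ 2`.
lemma abs_log_one_sub_pow_add_le {n : ℕ} (hn : 1 ≤ n) {ε δ u : ℝ} (hε : |ε| ≤ 1 / 2)
    (hδ0 : 0 ≤ δ) (hδ : |δ - ε ^ 2 / 4| ≤ |ε| ^ 3) (hu : δ / (2 * n) ≤ u)
    (hu' : u ≤ δ / (2 * n) + ε ^ 2 / (2 * n ^ 2)) :
    |log ((1 - u) ^ (n * (n - 1) / 2)) + n * ε ^ 2 / 16| ≤ n * |ε| ^ 3 + ε ^ 2 := by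
  have hm : (1 : ℝ) ≤ n := Nat.one_le_cast.2 hn
  have hlog : log ((1 - u) ^ (n * (n - 1) / 2)) = n * (n - 1) / 2 * log (1 - u) := by
    rw [log_pow, ← Nat.choose_two_right, Nat.cast_choose_two]
  have hu_le : u ≤ ε ^ 2 / n := by
    have : δ ≤ ε ^ 2 := by
      linarith [le_abs_self (δ - ε ^ 2 / 4), abs_pow_three_le_sq_div_two hε]
    have : δ / (2 * n) ≤ ε ^ 2 / (2 * n) := by gcongr
    have : ε ^ 2 / (2 * n ^ 2) ≤ ε ^ 2 / (2 * n) :=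
      div_le_div_of_nonneg_left (sq_nonneg ε) (by positivity) (by nlinarith)
    calc u ≤ ε ^ 2 / (2 * n) + ε ^ 2 / (2 * n) := by linarith
      _ = ε ^ 2 / n := by field_simp; ring
  have hu0 : 0 ≤ u := (by positivity : 0 ≤ δ / (2 * n)).trans hu
  have hquad := abs_choose_two_mul_log_one_sub_add_le hm hε hu0 hu_le
  have hlin := abs_choose_two_mul_sub_le hm hε hδ0 hδ hu hu'
  rw [hlog]
  calc _ = |n * (n - 1) / 2 * (log (1 - u) + u) - (n * (n - 1) / 2 * u - n * ε ^ 2 / 16)| := by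
        ring_nf
    _ ≤ ε ^ 2 / 4 + (n * |ε| ^ 3 / 4 + ε ^ 2 / 4) := (abs_sub _ _).trans (add_le_add hquad hlin)
    _ ≤ n * |ε| ^ 3 + ε ^ 2 := by nlinarith [abs_nonneg ε, pow_nonneg (abs_nonneg ε) 3]

lemma abs_log_bernoulliAffinity_pow_add_le {n : ℕ} (hn : 3 ≤ n) {lam : ℝ}
    (hlam : |lam - 1| ≤ 1 / 2) :
    |log (bernoulliAffinity (1 / n) (lam / n) ^ (n * (n - 1) / 2)) + n * (lam - 1) ^ 2 / 16|
      ≤ n * |lam - 1| ^ 3 + (lam - 1) ^ 2 := by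
  obtain ⟨hlam1, hlam2⟩ := abs_le.1 hlam
  have hn' : (3:ℝ) ≤ n := by exact_mod_cast hn
  have hn0 : (0:ℝ) < n := by linarith
  have hp : 1 / (n:ℝ) ≤ 1 := by rw [div_le_one hn0]; linarith
  have hq : lam / (n:ℝ) ≤ 1 := by rw [div_le_one hn0]; linarith
  have hpq : 1 / (n:ℝ) + lam / n ≤ 1 := by rw [← add_div, div_le_one hn0]; linarith
  have hsqrt : (√(1 / n) - √(lam / n)) ^ 2 / 2 = (√lam - 1) ^ 2 / (2 * n) := by
    rw [sqrt_div' _ hn0.le, sqrt_div' _ hn0.le, sqrt_one, ← sub_div, div_pow, sq_sqrt hn0.le]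
    ring
  have hdiff : (1 / (n:ℝ) - lam / n) ^ 2 / 2 = (lam - 1) ^ 2 / (2 * n ^ 2) := by
    field_simp; ring
  have hp0 : 0 ≤ 1 / (n:ℝ) := by positivity
  have hq0 : 0 ≤ lam / (n:ℝ) := div_nonneg (by linarith) hn0.le
  have hlow := le_one_sub_bernoulliAffinity hp0 hp hq0 hq
  have hup := one_sub_bernoulliAffinity_le hp0 hp hq0 hq hpq
  rw [hsqrt] at hlow hup
  rw [hdiff] at hup
  have h := abs_log_one_sub_pow_add_le (by omega) hlam (sq_nonneg _)
    (abs_sq_sqrt_sub_one_sub_le (by linarith)) hlow hup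
  rwa [sub_sub_cancel] at h

theorem ER_critical_affinity_asymptotics_general (lam : ℕ → ℝ)
    (hlim : Tendsto lam atTop (nhds 1)) :
    (∃ A > (0:ℝ), Tendsto (fun n =>
        (Real.sqrt (lam n) / n
          + Real.sqrt ((1 - 1 / n) * (1 - lam n / n))) ^ (n * (n - 1) / 2)
        - A * Real.exp (-(n * (lam n - 1) ^ 2) / 16)) atTop (nhds 0)) ∧
    ∃ E : ℕ → ℝ, (E =O[atTop] fun n => (n : ℝ) * |lam n - 1| ^ 3 + 1) ∧
      ∀ᶠ n in atTop,
        Real.log ((Real.sqrt (lam n) / n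
            + Real.sqrt ((1 - 1 / n) * (1 - lam n / n))) ^ (n * (n - 1) / 2))
          = -(n * (lam n - 1) ^ 2) / 16 + E n := by
  simp only [← bernoulliAffinity_one_div_div (Nat.cast_nonneg _)]
  set b : ℕ → ℝ := fun n => bernoulliAffinity (1 / n) (lam n / n)
  set E : ℕ → ℝ := fun n => log (b n ^ (n * (n - 1) / 2)) + n * (lam n - 1) ^ 2 / 16
  have hε : Tendsto (fun n => lam n - 1) atTop (nhds 0) := by simpa using hlim.sub_const 1
  have hsmall : ∀ᶠ n in atTop, |lam n - 1| ≤ 1 / 2 :=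
    ((tendsto_zero_iff_abs_tendsto_zero _).1 hε).eventually (eventually_le_nhds (by norm_num))
  have hE : ∀ᶠ n in atTop, |E n| ≤ n * |lam n - 1| ^ 3 + (lam n - 1) ^ 2 := by
    filter_upwards [eventually_ge_atTop 3, hsmall] with n hn hlam
    exact abs_log_bernoulliAffinity_pow_add_le hn hlam
  have hb : ∀ᶠ n in atTop, 0 < b n := by
    filter_upwards [eventually_ge_atTop 3, hsmall] with n hn hlam
    have hn' : (3:ℝ) ≤ n := by exact_mod_cast hn
    exact bernoulliAffinity_pos (by rw [div_lt_one (by linarith)]; linarith)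
      (by rw [div_lt_one (by linarith)]; linarith [abs_le.1 hlam])
  refine ⟨⟨1, one_pos, ?_⟩, E, ?_, Eventually.of_forall fun n => by ring⟩
  · have hE' : ∀ᶠ n in atTop, |E n| ≤ n * (lam n - 1) ^ 2 * |lam n - 1| + (lam n - 1) ^ 2 := by
      filter_upwards [hE] with n hn
      exact hn.trans_eq (by rw [pow_succ, sq_abs]; ring)
    refine (tendsto_exp_div_add_sub_exp_div (by norm_num : (0:ℝ) < 16)
      (Eventually.of_forall fun n => by positivity) hε hE').congr' ?_
    filter_upwards [hb] with n hn
    rw [one_mul, show -(n * (lam n - 1) ^ 2) / 16 + E n = log (b n ^ (n * (n - 1) / 2)) by ring,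
      exp_log (pow_pos hn _)]
  · refine IsBigO.of_bound 1 ?_
    filter_upwards [hE, hsmall] with n hn hlam
    have : (lam n - 1) ^ 2 ≤ 1 := by nlinarith [sq_abs (lam n - 1), abs_nonneg (lam n - 1)]
    rw [norm_eq_abs, norm_of_nonneg (by positivity), one_mul]
    linarith

theorem ER_critical_affinity_asymptotics (lam : ℕ → ℝ)
    (hpos : ∀ n, 0 < lam n)
    (hlim : Tendsto lam atTop (nhds 1))
    (hO : (fun n => lam n - 1) =O[atTop] fun n => ((n : ℝ)) ^ (-(1/3 : ℝ))) :
    (∃ A > (0:ℝ), Tendsto (fun n =>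
        (Real.sqrt (lam n) / n
          + Real.sqrt ((1 - 1 / n) * (1 - lam n / n))) ^ (n * (n - 1) / 2)
        - A * Real.exp (-(n * (lam n - 1) ^ 2) / 16)) atTop (nhds 0)) ∧
    ∃ E : ℕ → ℝ, (E =O[atTop] fun n => (n : ℝ) * |lam n - 1| ^ 3 + 1) ∧
      ∀ᶠ n in atTop,
        Real.log ((Real.sqrt (lam n) / n
            + Real.sqrt ((1 - 1 / n) * (1 - lam n / n))) ^ (n * (n - 1) / 2))
          = -(n * (lam n - 1) ^ 2) / 16 + E n :=
  ER_critical_affinity_asymptotics_general lam hlim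
end

section
/- Let p_{n,ij}, q_{n,ij} ∈ (0,1) with sup_{i<j} p_{n,ij} < C/(1+C) for some C > 0, and suppose Σ_{i<j} (p_{n,ij} - q_{n,ij})^2 / p_{n,ij} = O(1) as n → ∞. With k_{n,ij} = log(q_{n,ij}(1-p_{n,ij})/(p_{n,ij}(1-q_{n,ij}))), we have Σ_{i<j} k_{n,ij}^2 · q_{n,ij}(1-q_{n,ij}) ≤ 4(1+C)·Σ_{i<j} (p_{n,ij} - q_{n,ij})^2/p_{n,ij} = O(1). -/
/-!
Split the log odds ratio as `log (q / p) + log ((1 - p) / (1 - q))` and bound each part by the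
inequality `log (y / x) ^ 2 ≤ (y - x) ^ 2 / (x y)` (logarithmic mean ≥ geometric mean). The
weight `q (1 - q)` cancels the denominators `p q` and `(1 - p)(1 - q)` except for a factor
`(1 - p)⁻¹`, which the hypothesis `p < C / (1 + C)` bounds by `1 + C`. Summing gives the explicit
bound, and the `O(1)` statement follows from it.
-/

open Finset Filter Asymptotics

namespace Real

theorem sq_le_sinh_sq (x : ℝ) : x ^ 2 ≤ sinh x ^ 2 := by
  rcases le_total 0 x with hx | hx
  · exact pow_le_pow_left₀ hx (self_le_sinh_iff.mpr hx) 2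
  · simpa using pow_le_pow_left₀ (neg_nonneg.mpr hx) (neg_le_neg (sinh_le_self_iff.mpr hx)) 2

/-- With `t = exp (2u)` this is `u ^ 2 ≤ sinh u ^ 2`. -/
theorem log_sq_le_sub_one_sq_div {t : ℝ} (ht : 0 < t) : log t ^ 2 ≤ (t - 1) ^ 2 / t := by
  set u := log t / 2
  have hu : exp u ^ 2 = t := by
    rw [← exp_nat_mul, Nat.cast_ofNat, mul_div_cancel₀ _ two_ne_zero, exp_log ht]
  have hsinh : (t - 1) ^ 2 / t = (2 * sinh u) ^ 2 := by
    rw [sinh_eq, exp_neg, ← hu]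
    field_simp
  rw [hsinh, show log t = 2 * u by ring, mul_pow, mul_pow]
  exact mul_le_mul_of_nonneg_left (sq_le_sinh_sq u) (by norm_num)

theorem log_div_sq_le {x y : ℝ} (hx : 0 < x) (hy : 0 < y) :
    log (y / x) ^ 2 ≤ (y - x) ^ 2 / (x * y) := by
  have h := log_sq_le_sub_one_sq_div (div_pos hy hx)
  convert h using 1
  field_simp

end Real

open Real

theorem inv_one_sub_le_one_add {p C : ℝ} (hC : 0 < 1 + C) (hp : p < C / (1 + C)) :
    (1 - p)⁻¹ ≤ 1 + C := by
  have h : C / (1 + C) = 1 - (1 + C)⁻¹ := by field_simp; ring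
  have h1p : 0 < 1 - p := by linarith [inv_pos.mpr hC]
  exact (inv_le_comm₀ h1p hC).mpr (by linarith)

theorem log_odds_ratio_sq_mul_le {p q C : ℝ} (hC : 0 ≤ C) (hp : p ∈ Set.Ioo (0 : ℝ) 1)
    (hq : q ∈ Set.Ioo (0 : ℝ) 1) (hpC : p < C / (1 + C)) :
    log (q * (1 - p) / (p * (1 - q))) ^ 2 * (q * (1 - q)) ≤ 4 * (1 + C) * ((p - q) ^ 2 / p) := by
  obtain ⟨hp0, hp1⟩ := hp
  obtain ⟨hq0, hq1⟩ := hq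
  have h1p : 0 < 1 - p := by linarith
  have h1q : 0 < 1 - q := by linarith
  set a := log (q / p)
  set b := log ((1 - p) / (1 - q))
  have hsplit : log (q * (1 - p) / (p * (1 - q))) = a + b := by
    rw [mul_div_mul_comm, log_mul (by positivity) (by positivity)]
  have ha : a ^ 2 * (p * q) ≤ (p - q) ^ 2 := by
    have := log_div_sq_le hp0 hq0
    rwa [le_div_iff₀ (by positivity), sub_sq_comm] at this
  have hb : b ^ 2 * ((1 - q) * (1 - p)) ≤ (p - q) ^ 2 := by
    have := log_div_sq_le h1q h1p
    rwa [le_div_iff₀ (by positivity), sub_sub_sub_cancel_left, sub_sq_comm] at this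
  have hinv : 1 ≤ (1 + C) * (1 - p) := by
    have := inv_one_sub_le_one_add (by linarith) hpC
    rwa [inv_le_iff_one_le_mul₀ h1p] at this
  rw [hsplit, mul_div_assoc', le_div_iff₀ hp0]
  have hqq : 0 ≤ q * (1 - q) := by positivity
  calc (a + b) ^ 2 * (q * (1 - q)) * p
      ≤ 2 * (a ^ 2 * (p * q)) * (1 - q) + 2 * b ^ 2 * (1 - q) * (q * p) := by
        nlinarith [mul_nonneg (sq_nonneg (a - b)) (mul_nonneg hqq hp0.le)]
    _ ≤ 2 * (p - q) ^ 2 + 2 * b ^ 2 * (1 - q) * ((1 + C) * (1 - p)) := by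
        have hqp : q * p ≤ (1 + C) * (1 - p) := by nlinarith
        have hapq : 0 ≤ a ^ 2 * (p * q) := by positivity
        exact add_le_add (by nlinarith) (by gcongr)
    _ ≤ 2 * (p - q) ^ 2 + 2 * (1 + C) * (p - q) ^ 2 := by nlinarith
    _ ≤ 4 * (1 + C) * (p - q) ^ 2 := by nlinarith [sq_nonneg (p - q)]

theorem sum_log_odds_ratio_sq_mul_le {ι : Type*} (s : Finset ι) (p q : ι → ℝ) {C : ℝ}
    (hC : 0 ≤ C) (hp : ∀ i ∈ s, p i ∈ Set.Ioo (0 : ℝ) 1)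
    (hq : ∀ i ∈ s, q i ∈ Set.Ioo (0 : ℝ) 1) (hpC : ∀ i ∈ s, p i < C / (1 + C)) :
    ∑ i ∈ s, log (q i * (1 - p i) / (p i * (1 - q i))) ^ 2 * (q i * (1 - q i))
      ≤ 4 * (1 + C) * ∑ i ∈ s, (p i - q i) ^ 2 / p i := by
  rw [mul_sum]
  exact sum_le_sum fun i hi => log_odds_ratio_sq_mul_le hC (hp i hi) (hq i hi) (hpC i hi)

theorem janson_condition_bounds_variance
    (p q : (n : ℕ) → ℕ × ℕ → ℝ) (C : ℝ) (hC : 0 < C)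
    (hp : ∀ n, ∀ e ∈ (range n ×ˢ range n).filter (fun e => e.1 < e.2),
      p n e ∈ Set.Ioo (0:ℝ) 1)
    (hq : ∀ n, ∀ e ∈ (range n ×ˢ range n).filter (fun e => e.1 < e.2),
      q n e ∈ Set.Ioo (0:ℝ) 1)
    (hsup : ∀ n, ∀ e ∈ (range n ×ˢ range n).filter (fun e => e.1 < e.2),
      p n e < C / (1 + C))
    (hO : (fun n => ∑ e ∈ (range n ×ˢ range n).filter (fun e => e.1 < e.2),
        (p n e - q n e) ^ 2 / p n e) =O[atTop] fun _ => (1:ℝ)) :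
    (∀ n, ∑ e ∈ (range n ×ˢ range n).filter (fun e => e.1 < e.2),
        (Real.log ((q n e * (1 - p n e)) / (p n e * (1 - q n e)))) ^ 2
          * (q n e * (1 - q n e))
      ≤ 4 * (1 + C) * ∑ e ∈ (range n ×ˢ range n).filter (fun e => e.1 < e.2),
          (p n e - q n e) ^ 2 / p n e) ∧
    (fun n => ∑ e ∈ (range n ×ˢ range n).filter (fun e => e.1 < e.2),
        (Real.log ((q n e * (1 - p n e)) / (p n e * (1 - q n e)))) ^ 2
          * (q n e * (1 - q n e))) =O[atTop] fun _ => (1:ℝ) := by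
  have hbound n := sum_log_odds_ratio_sq_mul_le _ (p n) (q n) hC.le (hp n) (hq n) (hsup n)
  refine ⟨hbound, (isBigO_of_le _ fun n => ?_).trans (hO.const_mul_left (4 * (1 + C)))⟩
  have hnonneg : 0 ≤ ∑ e ∈ (range n ×ˢ range n).filter (fun e => e.1 < e.2),
      Real.log (q n e * (1 - p n e) / (p n e * (1 - q n e))) ^ 2 * (q n e * (1 - q n e)) :=
    sum_nonneg fun e he => by
      obtain ⟨hq0, hq1⟩ := hq n e he
      have : 0 < 1 - q n e := sub_pos.mpr hq1
      positivity
  rw [Real.norm_of_nonneg hnonneg]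
  exact (hbound n).trans (le_norm_self _)
end
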